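/- arXiv:2502.16233 — 2 statements merged into one kernel-verified Lean document; each statement's English description precedes it below -/
import Mathlib

section
/- Let W be a countable set and let ψ : W → ℕ be an injection. Fix N ∈ ℕ and a natural number P > N. Then the function mapping each multiset S over W of cardinality less than N to the sum over s ∈ S of P^{-ψ(s)} (as a rational number) is injective on the set of such multisets. -/
/-! Cancelling the common part of the two multisets of exponents leaves two disjoint multisets
with equal sums. If they were not both empty, their least exponent `m` would occur on one side
only, contributing at least `P⁻ᵐ` there, while the fewer than `P` exponents on the other side
all exceed `m` and sum to less than `P · P⁻⁽ᵐ⁺¹⁾ = P⁻ᵐ`. -/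

namespace Multiset

variable {K : Type*} [Field K] [LinearOrder K] [IsStrictOrderedRing K] {P : ℕ}

theorem sum_map_one_div_pow_lt {B : Multiset ℕ} {m : ℕ} (hB : card B < P)
    (hmB : ∀ b ∈ B, m < b) :
    (B.map fun b => (1 : K) / (P : K) ^ b).sum < 1 / (P : K) ^ m := by
  have hP : (1 : K) ≤ P := by exact_mod_cast (Nat.zero_le _).trans_lt hB
  have hbound : ∀ x ∈ B.map fun b => (1 : K) / (P : K) ^ b, x ≤ 1 / (P : K) ^ (m + 1) :=
    forall_mem_map_iff.2 fun b hb => by gcongr; exact hmB b hb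
  calc (B.map fun b => (1 : K) / (P : K) ^ b).sum
      ≤ card B • (1 / (P : K) ^ (m + 1)) := by simpa using sum_le_card_nsmul _ _ hbound
    _ < P * (1 / (P : K) ^ (m + 1)) := by
      rw [nsmul_eq_mul]
      gcongr
    _ = 1 / (P : K) ^ m := by
      rw [pow_succ]
      field_simp

theorem sum_map_one_div_pow_lt_of_mem {A B : Multiset ℕ} {m : ℕ} (hB : card B < P)
    (hm : m ∈ A) (hmB : ∀ b ∈ B, m < b) :
    (B.map fun b => (1 : K) / (P : K) ^ b).sum < (A.map fun a => (1 : K) / (P : K) ^ a).sum :=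
  (sum_map_one_div_pow_lt hB hmB).trans_le <|
    single_le_sum (forall_mem_map_iff.2 fun _ _ => by positivity) _ (mem_map_of_mem _ hm)

theorem add_eq_zero_of_disjoint_of_sum_map_one_div_pow_eq {A B : Multiset ℕ}
    (hA : card A < P) (hB : card B < P) (hAB : Disjoint A B)
    (h : (A.map fun a => (1 : K) / (P : K) ^ a).sum
      = (B.map fun b => (1 : K) / (P : K) ^ b).sum) :
    A + B = 0 := by
  by_contra hne
  obtain ⟨m, hm, hmin⟩ := exists_min_image id hne
  have hlt : ∀ x ∈ A + B, x ≠ m → m < x := fun x hx hxm => (hmin x hx).lt_of_ne' hxm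
  rcases mem_add.1 hm with hmA | hmB
  · refine (sum_map_one_div_pow_lt_of_mem hB hmA fun b hb => ?_).ne' h
    exact hlt b (mem_add.2 (.inr hb)) (ne_of_mem_of_not_mem hb (disjoint_left.1 hAB hmA))
  · refine (sum_map_one_div_pow_lt_of_mem hA hmB fun a ha => ?_).ne h
    exact hlt a (mem_add.2 (.inl ha)) (ne_of_mem_of_not_mem ha (disjoint_right.1 hAB hmB))

theorem eq_of_sum_map_one_div_pow_eq {A B : Multiset ℕ} (hA : card A < P) (hB : card B < P)
    (h : (A.map fun a => (1 : K) / (P : K) ^ a).sum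
      = (B.map fun b => (1 : K) / (P : K) ^ b).sum) :
    A = B := by
  have hsplit : ∀ C D : Multiset ℕ, (C.map fun c => (1 : K) / (P : K) ^ c).sum
      = ((C - D).map fun c => (1 : K) / (P : K) ^ c).sum
        + ((C ∩ D).map fun c => (1 : K) / (P : K) ^ c).sum := fun C D => by
    conv_lhs => rw [← sub_add_inter C D]
    rw [map_add, sum_add]
  have hsub : ((A - B).map fun a => (1 : K) / (P : K) ^ a).sum
      = ((B - A).map fun b => (1 : K) / (P : K) ^ b).sum := by
    rw [hsplit A B, hsplit B A, inter_comm B A] at h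
    exact add_right_cancel h
  have hdisj : Disjoint (A - B) (B - A) := disjoint_left.2 fun hx hx' => by
    rw [← count_pos, count_sub] at hx hx'
    omega
  obtain ⟨hAB, hBA⟩ := add_eq_zero.1 <| add_eq_zero_of_disjoint_of_sum_map_one_div_pow_eq
    ((card_le_card (Multiset.sub_le_self A B)).trans_lt hA) ((card_le_card (Multiset.sub_le_self B A)).trans_lt hB)
    hdisj hsub
  exact le_antisymm (tsub_eq_zero_iff_le.1 hAB) (tsub_eq_zero_iff_le.1 hBA)

end Multiset

theorem multiset_inv_prime_pow_sum_injective_general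
    {W : Type*} (ψ : W → ℕ) (hψ : Function.Injective ψ)
    (N P : ℕ) (hP : P > N)
    (S S' : Multiset W) (hS : S.card < N) (hS' : S'.card < N)
    (hsum : (S.map (fun s => (1 : ℚ) / (P : ℚ) ^ (ψ s))).sum
          = (S'.map (fun s => (1 : ℚ) / (P : ℚ) ^ (ψ s))).sum) :
    S = S' := by
  refine Multiset.map_injective hψ (Multiset.eq_of_sum_map_one_div_pow_eq (K := ℚ) (P := P)
    ?_ ?_ ?_)
  · rw [Multiset.card_map]; omega
  · rw [Multiset.card_map]; omega
  · simpa only [Multiset.map_map, Function.comp_def] using hsum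

/-- Let `W` be a countable set, `ψ : W → ℕ` an injection, and `P > N` natural numbers.
Then the map sending a multiset `S` over `W` of cardinality less than `N` to
`Σ_{s ∈ S} P^{-ψ(s)} ∈ ℚ` is injective on such multisets. -/
theorem multiset_inv_prime_pow_sum_injective
    {W : Type*} [Countable W] (ψ : W → ℕ) (hψ : Function.Injective ψ)
    (N P : ℕ) (hP : P > N)
    (S S' : Multiset W) (hS : S.card < N) (hS' : S'.card < N)
    (hsum : (S.map (fun s => (1 : ℚ) / (P : ℚ) ^ (ψ s))).sum
          = (S'.map (fun s => (1 : ℚ) / (P : ℚ) ^ (ψ s))).sum) :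
    S = S' :=
  multiset_inv_prime_pow_sum_injective_general ψ hψ N P hP S S' hS hS' hsum
end

section
/- Let ψ₁ : W₁ → {odd naturals} and ψ₂ : W₂ → {even naturals} be injections into the odd and even natural numbers respectively, let P be a prime, and define f₁(w) = P^{-ψ₁(w)}, f₂(w) = P^{-ψ₂(w)}. If S₁, S₁' are multisets over W₁ and S₂, S₂' are multisets over W₂, all of cardinality less than N where P > 3N, and Σ_{w∈S₁} f₁(w) + Σ_{w∈S₂} f₂(w) = Σ_{w∈S₁'} f₁(w) + Σ_{w∈S₂'} f₂(w), then S₁ = S₁' and S₂ = S₂'. -/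
/-!
Put `x = 1/P` and collect the exponents in one multiset `T = ψ₁(S₁) + ψ₂(S₂)` of fewer
than `2N < P` elements, and likewise `T'`; the hypothesis says `∑_{k ∈ T} x^k = ∑_{k ∈ T'} x^k`.
Such a sum determines `T`: the number of zeros in `T` is the integer part of the sum, because
the remaining terms add up to at most `x · #T < 1`, and after removing the zeros and dividing by `x`
the argument repeats with all exponents lowered by one. Parity then splits `T` back into
`ψ₁(S₁)` and `ψ₂(S₂)`, and injectivity of `ψ₁`, `ψ₂` recovers the multisets.
-/

theorem Nat.eq_of_natCast_add_eq {R : Type*} [CommRing R] [LinearOrder R]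
    [IsStrictOrderedRing R] {c c' : ℕ} {r r' : R} (hr₀ : 0 ≤ r) (hr₁ : r < 1)
    (hr₀' : 0 ≤ r') (hr₁' : r' < 1) (h : c + r = c' + r') : c = c' := by
  have h₁ : (c : R) < c' + 1 := by linarith
  have h₂ : (c' : R) < c + 1 := by linarith
  exact le_antisymm (Nat.lt_succ_iff.1 (by exact_mod_cast h₁))
    (Nat.lt_succ_iff.1 (by exact_mod_cast h₂))

namespace Multiset

theorem exists_eq_replicate_zero_add_map_succ (U : Multiset ℕ) :
    ∃ (c : ℕ) (V : Multiset ℕ), U = replicate c 0 + V.map Nat.succ := by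
  induction U using Multiset.induction_on with
  | empty => exact ⟨0, 0, rfl⟩
  | cons a U ih =>
    obtain ⟨c, V, rfl⟩ := ih
    cases a with
    | zero => exact ⟨c + 1, V, by simp [replicate_succ]⟩
    | succ a => exact ⟨c, a ::ₘ V, by simp⟩

section PowSum

variable {K : Type*}

theorem sum_map_pow_replicate_zero_add_map_succ [Semiring K] (x : K) (c : ℕ)
    (V : Multiset ℕ) :
    ((replicate c 0 + V.map Nat.succ).map (x ^ ·)).sum = c + x * (V.map (x ^ ·)).sum := by
  simp [map_replicate, sum_replicate, map_map, pow_succ', sum_map_mul_left]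

section OrderedSemiring

variable [Semiring K] [PartialOrder K] [IsOrderedRing K] {x : K}

theorem sum_map_pow_nonneg (hx₀ : 0 ≤ x) (V : Multiset ℕ) : 0 ≤ (V.map (x ^ ·)).sum :=
  sum_nonneg fun _ hy => by
    obtain ⟨k, -, rfl⟩ := mem_map.1 hy
    exact pow_nonneg hx₀ k

theorem sum_map_pow_le_card (hx₀ : 0 ≤ x) (hx₁ : x ≤ 1) (V : Multiset ℕ) :
    (V.map (x ^ ·)).sum ≤ V.card := by
  have hle : ∀ y ∈ V.map (x ^ ·), y ≤ 1 := fun _ hy => by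
    obtain ⟨k, -, rfl⟩ := mem_map.1 hy
    exact pow_le_one₀ hx₀ hx₁
  simpa using sum_le_card_nsmul _ _ hle

theorem mul_sum_map_pow_lt_one (hx₀ : 0 ≤ x) (hx₁ : x ≤ 1) {V : Multiset ℕ}
    (hV : x * V.card < 1) : x * (V.map (x ^ ·)).sum < 1 :=
  (mul_le_mul_of_nonneg_left (sum_map_pow_le_card hx₀ hx₁ V) hx₀).trans_lt hV

end OrderedSemiring

variable [Field K] [LinearOrder K] [IsStrictOrderedRing K] {x : K}

theorem eq_of_sum_map_pow_eq_of_forall_lt (hx₀ : 0 < x) (hx₁ : x ≤ 1) (n : ℕ)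
    {U U' : Multiset ℕ} (hUn : ∀ k ∈ U, k < n) (hU'n : ∀ k ∈ U', k < n)
    (hU : x * U.card < 1) (hU' : x * U'.card < 1)
    (h : (U.map (x ^ ·)).sum = (U'.map (x ^ ·)).sum) : U = U' := by
  induction n generalizing U U' with
  | zero =>
    rw [eq_zero_of_forall_notMem fun k hk => Nat.not_lt_zero k (hUn k hk),
      eq_zero_of_forall_notMem fun k hk => Nat.not_lt_zero k (hU'n k hk)]
  | succ n ih =>
    obtain ⟨c, V, rfl⟩ := exists_eq_replicate_zero_add_map_succ U
    obtain ⟨c', V', rfl⟩ := exists_eq_replicate_zero_add_map_succ U'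
    simp only [card_add, card_map, card_replicate, Nat.cast_add] at hU hU'
    rw [sum_map_pow_replicate_zero_add_map_succ, sum_map_pow_replicate_zero_add_map_succ] at h
    have hV : x * V.card < 1 := by nlinarith [c.cast_nonneg (α := K)]
    have hV' : x * V'.card < 1 := by nlinarith [c'.cast_nonneg (α := K)]
    obtain rfl : c = c' := Nat.eq_of_natCast_add_eq
      (mul_nonneg hx₀.le (sum_map_pow_nonneg hx₀.le V)) (mul_sum_map_pow_lt_one hx₀.le hx₁ hV)
      (mul_nonneg hx₀.le (sum_map_pow_nonneg hx₀.le V')) (mul_sum_map_pow_lt_one hx₀.le hx₁ hV') h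
    have hVV : (V.map (x ^ ·)).sum = (V'.map (x ^ ·)).sum :=
      mul_left_cancel₀ hx₀.ne' (add_left_cancel h)
    have hlt {W : Multiset ℕ} (hW : ∀ k ∈ replicate c 0 + W.map Nat.succ, k < n + 1) :
        ∀ k ∈ W, k < n := fun k hk =>
      Nat.succ_lt_succ_iff.1 (hW _ (mem_add.2 (.inr (mem_map_of_mem _ hk))))
    rw [ih (hlt hUn) (hlt hU'n) hV hV' hVV]

theorem eq_of_sum_map_pow_eq (hx₀ : 0 < x) (hx₁ : x ≤ 1) {U U' : Multiset ℕ}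
    (hU : x * U.card < 1) (hU' : x * U'.card < 1)
    (h : (U.map (x ^ ·)).sum = (U'.map (x ^ ·)).sum) : U = U' := by
  have hlt {k : ℕ} (hk : k ∈ U + U') : k < (U + U').sum + 1 :=
    Nat.lt_succ_of_le (le_sum_of_mem hk)
  exact eq_of_sum_map_pow_eq_of_forall_lt hx₀ hx₁ _ (fun _ hk => hlt (mem_add.2 (.inl hk)))
    (fun _ hk => hlt (mem_add.2 (.inr hk))) hU hU' h

end PowSum

theorem filter_add_of_forall {α : Type*} {p : α → Prop} [DecidablePred p]
    {A B : Multiset α} (hA : ∀ a ∈ A, p a) (hB : ∀ b ∈ B, ¬ p b) : (A + B).filter p = A := by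
  rw [filter_add, filter_eq_self.2 hA, filter_eq_nil.2 hB, add_zero]

theorem eq_and_eq_of_map_add_map_eq {α β γ : Type*} {ψ₁ : α → γ} {ψ₂ : β → γ}
    (hψ₁ : Function.Injective ψ₁) (hψ₂ : Function.Injective ψ₂)
    (p : γ → Prop) [DecidablePred p] (hp₁ : ∀ a, p (ψ₁ a)) (hp₂ : ∀ b, ¬ p (ψ₂ b))
    {S₁ S₁' : Multiset α} {S₂ S₂' : Multiset β}
    (h : S₁.map ψ₁ + S₂.map ψ₂ = S₁'.map ψ₁ + S₂'.map ψ₂) : S₁ = S₁' ∧ S₂ = S₂' := by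
  have hA (S : Multiset α) : ∀ y ∈ S.map ψ₁, p y := forall_mem_map_iff.2 fun a _ => hp₁ a
  have hB (S : Multiset β) : ∀ y ∈ S.map ψ₂, ¬ p y := forall_mem_map_iff.2 fun b _ => hp₂ b
  have h₁ := congrArg (filter p) h
  have h₂ := congrArg (filter (¬ p ·)) h
  rw [filter_add_of_forall (hA _) (hB _), filter_add_of_forall (hA _) (hB _)] at h₁
  rw [add_comm, add_comm (S₁'.map ψ₁), filter_add_of_forall (hB _) (by simpa using hA _),
    filter_add_of_forall (hB _) (by simpa using hA _)] at h₂
  exact ⟨map_injective hψ₁ h₁, map_injective hψ₂ h₂⟩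

end Multiset

theorem odd_even_prime_pow_sum_injective_general
    {W₁ W₂ : Type*}
    (ψ₁ : W₁ → ℕ) (hψ₁ : Function.Injective ψ₁) (hodd : ∀ w, Odd (ψ₁ w))
    (ψ₂ : W₂ → ℕ) (hψ₂ : Function.Injective ψ₂) (heven : ∀ w, Even (ψ₂ w))
    (P N : ℕ) (hPN : P > 3 * N)
    (S₁ S₁' : Multiset W₁) (S₂ S₂' : Multiset W₂)
    (h₁ : S₁.card < N) (h₁' : S₁'.card < N) (h₂ : S₂.card < N) (h₂' : S₂'.card < N)
    (hsum : (S₁.map (fun w => (1 : ℚ) / (P : ℚ) ^ (ψ₁ w))).sum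
          + (S₂.map (fun w => (1 : ℚ) / (P : ℚ) ^ (ψ₂ w))).sum
          = (S₁'.map (fun w => (1 : ℚ) / (P : ℚ) ^ (ψ₁ w))).sum
          + (S₂'.map (fun w => (1 : ℚ) / (P : ℚ) ^ (ψ₂ w))).sum) :
    S₁ = S₁' ∧ S₂ = S₂' := by
  have hP : (1 : ℚ) ≤ P := by exact_mod_cast (by omega : 1 ≤ P)
  have hx₀ : (0 : ℚ) < (P : ℚ)⁻¹ := inv_pos.2 (by linarith)
  have hcard : ∀ (A : Multiset W₁) (B : Multiset W₂), A.card < N → B.card < N →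
      (P : ℚ)⁻¹ * (A.map ψ₁ + B.map ψ₂).card < 1 := fun A B hA hB => by
    rw [inv_mul_lt_one₀ (by linarith)]
    exact_mod_cast (by simp only [Multiset.card_add, Multiset.card_map]; omega)
  have hT := Multiset.eq_of_sum_map_pow_eq hx₀ (inv_le_one_of_one_le₀ hP)
    (hcard S₁ S₂ h₁ h₂) (hcard S₁' S₂' h₁' h₂') (by simpa [Multiset.map_map,
      Function.comp_def, one_div, inv_pow] using hsum)
  exact Multiset.eq_and_eq_of_map_add_map_eq hψ₁ hψ₂ Odd hodd
    (fun w => Nat.not_odd_iff_even.2 (heven w)) hT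

/-- Separating two multisets via odd/even exponents of a prime: if `ψ₁` maps `W₁`
injectively into the odd naturals, `ψ₂` maps `W₂` injectively into the even naturals,
`P` is a prime with `P > 3N`, and the combined sums `Σ P^{-ψ₁(w)} + Σ P^{-ψ₂(w)}`
over multisets of cardinality less than `N` agree, then the multisets agree pairwise. -/
theorem odd_even_prime_pow_sum_injective
    {W₁ W₂ : Type*} [Countable W₁] [Countable W₂]
    (ψ₁ : W₁ → ℕ) (hψ₁ : Function.Injective ψ₁) (hodd : ∀ w, Odd (ψ₁ w))
    (ψ₂ : W₂ → ℕ) (hψ₂ : Function.Injective ψ₂) (heven : ∀ w, Even (ψ₂ w))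
    (P N : ℕ) (hP : P.Prime) (hPN : P > 3 * N)
    (S₁ S₁' : Multiset W₁) (S₂ S₂' : Multiset W₂)
    (h₁ : S₁.card < N) (h₁' : S₁'.card < N) (h₂ : S₂.card < N) (h₂' : S₂'.card < N)
    (hsum : (S₁.map (fun w => (1 : ℚ) / (P : ℚ) ^ (ψ₁ w))).sum
          + (S₂.map (fun w => (1 : ℚ) / (P : ℚ) ^ (ψ₂ w))).sum
          = (S₁'.map (fun w => (1 : ℚ) / (P : ℚ) ^ (ψ₁ w))).sum
          + (S₂'.map (fun w => (1 : ℚ) / (P : ℚ) ^ (ψ₂ w))).sum) :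
    S₁ = S₁' ∧ S₂ = S₂' :=
  odd_even_prime_pow_sum_injective_general ψ₁ hψ₁ hodd ψ₂ hψ₂ heven P N hPN S₁ S₁' S₂ S₂' h₁ h₁' h₂
    h₂' hsum
end
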